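/- The 3×3 skew-symmetric matrix C with rows (0, 0, −1), (0, 0, −1), (1, 1, 0) is an unfolding of the 2×2 skew-symmetrizable matrix B with rows (0, −2), (1, 0), with respect to the index sets E_1 = {1, 2} and E_2 = {3}: for every finite sequence k_1, …, k_r of indices in {1, 2}, the matrix μ̂_{k_1}⋯μ̂_{k_r}(C) satisfies assertions (1)–(2) with respect to μ_{k_1}⋯μ_{k_r}(B). -/

import Mathlib

open Matrix

/-- Matrix mutation in direction `k`. -/
def mutate {n : ℕ} (B : Matrix (Fin n) (Fin n) ℤ) (k : Fin n) : Matrix (Fin n) (Fin n) ℤ :=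
  Matrix.of fun i j =>
    if i = k ∨ j = k then -B i j
    else B i j + (|B i k| * B k j + B i k * |B k j|) / 2

/-- The mutation class of `B`: all matrices obtained from `B` by finite sequences of mutations. -/
def mutationClass {n : ℕ} (B : Matrix (Fin n) (Fin n) ℤ) : Set (Matrix (Fin n) (Fin n) ℤ) :=
  {B' | ∃ l : List (Fin n), B' = l.foldl mutate B}

/-- `B` is skew-symmetrizable: there are positive integers `d i` with `b_ij d_j = -(b_ji d_i)`. -/
def IsSkewSymmetrizable {n : ℕ} (B : Matrix (Fin n) (Fin n) ℤ) : Prop :=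
  ∃ d : Fin n → ℤ, (∀ i, 0 < d i) ∧ ∀ i j, B i j * d j = -(B j i * d i)

/-- Assertions (1)–(2) of the definition of unfolding, for the fibers `E i = π ⁻¹ {i}`:
(1) for all `i` and all `b` the sum of `C a b` over `a ∈ E i` equals `B i (π b)`;
(2) if `B (π a) (π b) ≥ 0` then `C a b ≥ 0`. -/
def SatisfiesUnfoldingConds {m n : ℕ} (π : Fin m → Fin n)
    (B : Matrix (Fin n) (Fin n) ℤ) (C : Matrix (Fin m) (Fin m) ℤ) : Prop :=
  (∀ (i : Fin n) (b : Fin m),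
      (∑ a ∈ Finset.univ.filter (fun a => π a = i), C a b) = B i (π b)) ∧
  (∀ a b : Fin m, 0 ≤ B (π a) (π b) → 0 ≤ C a b)

/-- The composite mutation `μ̂_i`: the composition of the mutations `μ_a` over all
`a ∈ E i = π ⁻¹ {i}`, performed in a fixed order. -/
def compMutate {m n : ℕ} (π : Fin m → Fin n) (C : Matrix (Fin m) (Fin m) ℤ)
    (i : Fin n) : Matrix (Fin m) (Fin m) ℤ :=
  ((Finset.univ.filter (fun a => π a = i)).sort (· ≤ ·)).foldl mutate C

/-- `C` is an unfolding of `B` (w.r.t. the index sets `E i = π ⁻¹ {i}`): after any finite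
sequence of composite mutations, assertions (1)–(2) hold for the correspondingly
mutated matrices. -/
def IsUnfolding {m n : ℕ} (π : Fin m → Fin n) (B : Matrix (Fin n) (Fin n) ℤ)
    (C : Matrix (Fin m) (Fin m) ℤ) : Prop :=
  ∀ l : List (Fin n),
    SatisfiesUnfoldingConds π (l.foldl mutate B) (l.foldl (compMutate π) C)

/-! Every mutation of `B` and both composite mutations of `C` merely negate the matrix. Since
mutation commutes with negation, the orbits of `B` and `C` under the mutation sequences are
`{B, -B}` and `{C, -C}`, in lockstep, and assertions (1)–(2) are checked directly for both pairs. -/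

section

variable {m n : ℕ}

lemma even_abs_mul_add_mul_abs (a b : ℤ) : Even (|a| * b + a * |b|) := by
  rcases abs_choice a with ha | ha <;> rcases abs_choice b with hb | hb <;>
    simp [ha, hb, parity_simps]

lemma mutate_neg (B : Matrix (Fin n) (Fin n) ℤ) (k : Fin n) : mutate (-B) k = -mutate B k := by
  ext i j
  have hnum : |-B i k| * -B k j + -B i k * |-B k j| =
      -(|B i k| * B k j + B i k * |B k j|) := by
    rw [abs_neg, abs_neg]; ring
  simp only [mutate, of_apply, neg_apply]
  split_ifs
  · rfl
  · rw [hnum, Int.neg_ediv_of_dvd (even_abs_mul_add_mul_abs _ _).two_dvd, neg_add]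

lemma foldl_mutate_neg (B : Matrix (Fin n) (Fin n) ℤ) (l : List (Fin n)) :
    l.foldl mutate (-B) = -l.foldl mutate B := by
  induction l generalizing B with
  | nil => rfl
  | cons k l ih => rw [List.foldl_cons, List.foldl_cons, mutate_neg, ih]

lemma compMutate_neg (π : Fin m → Fin n) (C : Matrix (Fin m) (Fin m) ℤ) (i : Fin n) :
    compMutate π (-C) i = -compMutate π C i :=
  foldl_mutate_neg C _

lemma compMutate_eq_foldl {π : Fin m → Fin n} {i : Fin n} (C : Matrix (Fin m) (Fin m) ℤ)
    {l : List (Fin m)} (hl : l.Pairwise (· < ·))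
    (hfiber : Finset.univ.filter (π · = i) = l.toFinset) :
    compMutate π C i = l.foldl mutate C := by
  rw [compMutate, hfiber, (List.toFinset_sort _ hl.nodup).2 (hl.imp le_of_lt)]

theorem IsUnfolding.of_mutate_eq_neg {π : Fin m → Fin n} {B : Matrix (Fin n) (Fin n) ℤ}
    {C : Matrix (Fin m) (Fin m) ℤ} (hB : ∀ k, mutate B k = -B)
    (hC : ∀ i, compMutate π C i = -C) (hBC : SatisfiesUnfoldingConds π B C)
    (hBC_neg : SatisfiesUnfoldingConds π (-B) (-C)) : IsUnfolding π B C := by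
  intro l
  induction l generalizing B C with
  | nil => exact hBC
  | cons k l ih =>
    rw [List.foldl_cons, List.foldl_cons, hB, hC]
    refine ih (fun k => ?_) (fun i => ?_) hBC_neg (by rwa [neg_neg, neg_neg])
    · rw [mutate_neg, hB]
    · rw [compMutate_neg, hC]

end

/-- The given `3 × 3` skew-symmetric matrix is an unfolding of the `2 × 2` matrix `B` with
rows `(0, -2), (1, 0)`, with `E_1 = {1, 2}` and `E_2 = {3}`. -/
theorem unfolding_example_two :
    IsUnfolding (![0, 0, 1] : Fin 3 → Fin 2)
      !![0, -2; 1, 0]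
      !![0, 0, -1; 0, 0, -1; 1, 1, 0] := by
  refine IsUnfolding.of_mutate_eq_neg (by decide) (fun i => ?_) ?_ ?_
  · fin_cases i
    · rw [compMutate_eq_foldl _ (l := [0, 1]) (by decide) (by decide)]
      decide
    · rw [compMutate_eq_foldl _ (l := [2]) (by decide) (by decide)]
      decide
  · exact ⟨by decide, fun a b => by fin_cases a <;> fin_cases b <;> decide⟩
  · exact ⟨by decide, fun a b => by fin_cases a <;> fin_cases b <;> decide⟩
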